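/- Let G be a simple connected graph of order n with uv ∈ E(G), let G′ = G − uv + uw + wv be obtained by subdividing the edge uv, and let f be a harmonic eigenfunction associated with the normalized Laplacian spectral radius ρ(𝓛(G)). If f(u)f(v) ≥ 0, then ρ(𝓛(G)) ≤ ρ(𝓛(G′)); moreover, if f(u)f(v) > 0, then ρ(𝓛(G)) < ρ(𝓛(G′)) strictly. -/

import Mathlib

open Matrix Finset BigOperators

namespace NLap

variable {V : Type} [Fintype V] [DecidableEq V]

/-- The normalized Laplacian matrix `𝓛(G) = D^{-1/2} (D - A) D^{-1/2}` of a simple graph. -/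
noncomputable def normLap (G : SimpleGraph V) [DecidableRel G.Adj] : Matrix V V ℝ :=
  Matrix.diagonal (fun v => (Real.sqrt (G.degree v : ℝ))⁻¹) * G.lapMatrix ℝ *
    Matrix.diagonal (fun v => (Real.sqrt (G.degree v : ℝ))⁻¹)

/-- The `k`-th smallest eigenvalue (1-indexed, counted with multiplicity) of a real matrix:
the `k`-th element of the sorted multiset of roots of its characteristic polynomial. -/
noncomputable def nthEig (M : Matrix V V ℝ) (k : ℕ) : ℝ :=
  (M.charpoly.roots.sort (· ≤ ·)).getD (k - 1) 0

/-- `λ₂(G)`, the second smallest normalized Laplacian eigenvalue. -/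
noncomputable def lambda2 (G : SimpleGraph V) [DecidableRel G.Adj] : ℝ :=
  nthEig (normLap G) 2

/-- `ρ(𝓛(G)) = λ_n(G)`, the normalized Laplacian spectral radius. -/
noncomputable def rhoL (G : SimpleGraph V) [DecidableRel G.Adj] : ℝ :=
  nthEig (normLap G) (Fintype.card V)

/-- `f` is a harmonic eigenfunction associated with the eigenvalue `lam` of `𝓛(G)`:
`f ≠ 0` and `L f = lam • D f`. -/
def IsHarmonic (G : SimpleGraph V) [DecidableRel G.Adj] (lam : ℝ) (f : V → ℝ) : Prop :=
  f ≠ 0 ∧ G.lapMatrix ℝ *ᵥ f = fun v => lam * ((G.degree v : ℝ) * f v)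

/-- `∑_{uv ∈ E(G)} (f(u) - f(v))²`. -/
noncomputable def edgeSum (G : SimpleGraph V) [DecidableRel G.Adj] (f : V → ℝ) : ℝ :=
  ∑ e ∈ G.edgeFinset, Sym2.lift ⟨fun u v => (f u - f v) ^ 2, fun u v => by ring⟩ e


/-- The graph obtained from `G` by subdividing the edge `uv`:
delete `uv`, add a new vertex `w = Sum.inr ()` and the edges `uw`, `wv`. -/
def subdivide {V : Type} (G : SimpleGraph V) (u v : V) : SimpleGraph (V ⊕ Unit) where
  Adj x y :=
    match x, y with
    | Sum.inl a, Sum.inl b => G.Adj a b ∧ ¬(a = u ∧ b = v) ∧ ¬(a = v ∧ b = u)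
    | Sum.inl a, Sum.inr _ => a = u ∨ a = v
    | Sum.inr _, Sum.inl b => b = u ∨ b = v
    | Sum.inr _, Sum.inr _ => False
  symm := by
    constructor
    rintro (a | a) (b | b) h
    · exact ⟨h.1.symm, fun hc => h.2.2 ⟨hc.2, hc.1⟩, fun hc => h.2.1 ⟨hc.2, hc.1⟩⟩
    · exact h
    · exact h
    · exact h
  loopless := by
    constructor
    rintro (a | a) h
    · exact G.loopless.irrefl a h.1
    · exact h

instance {V : Type} [DecidableEq V] (G : SimpleGraph V) [DecidableRel G.Adj] (u v : V) :
    DecidableRel (subdivide G u v).Adj := fun x y => by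
  rcases x with a | a <;> rcases y with b | b
  · exact inferInstanceAs (Decidable (G.Adj a b ∧ ¬(a = u ∧ b = v) ∧ ¬(a = v ∧ b = u)))
  · exact inferInstanceAs (Decidable (a = u ∨ a = v))
  · exact inferInstanceAs (Decidable (b = u ∨ b = v))
  · exact inferInstanceAs (Decidable False)

/-- `IsSubdivisionOf H G` : `H` is obtained from `G` (up to isomorphism) by repeatedly
subdividing edges. -/
inductive IsSubdivisionOf : {V W : Type} → SimpleGraph W → SimpleGraph V → Prop
  | iso {V W : Type} {G : SimpleGraph V} {H : SimpleGraph W} :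
      Nonempty (G ≃g H) → IsSubdivisionOf H G
  | step {V W : Type} {G : SimpleGraph V} {H : SimpleGraph W} (u v : V) :
      G.Adj u v → IsSubdivisionOf H (subdivide G u v) → IsSubdivisionOf H G

/-- The graph obtained from `G₁` and `G₂` by identifying `u ∈ V(G₁)` with `v ∈ V(G₂)`;
the merged vertex is `Sum.inl u`. -/
def glue {V₁ V₂ : Type} (G₁ : SimpleGraph V₁) (G₂ : SimpleGraph V₂) (u : V₁) (v : V₂) :
    SimpleGraph (V₁ ⊕ {y : V₂ // y ≠ v}) where
  Adj x y :=
    match x, y with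
    | Sum.inl a, Sum.inl b => G₁.Adj a b
    | Sum.inl a, Sum.inr b => a = u ∧ G₂.Adj v b.1
    | Sum.inr a, Sum.inl b => b = u ∧ G₂.Adj v a.1
    | Sum.inr a, Sum.inr b => G₂.Adj a.1 b.1
  symm := by
    constructor
    rintro (a | a) (b | b) h
    · exact h.symm
    · exact h
    · exact h
    · exact h.symm
  loopless := by
    constructor
    rintro (a | a) h
    · exact G₁.loopless.irrefl a h
    · exact G₂.loopless.irrefl a.1 h

instance {V₁ V₂ : Type} [DecidableEq V₁] (G₁ : SimpleGraph V₁) (G₂ : SimpleGraph V₂)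
    [DecidableRel G₁.Adj] [DecidableRel G₂.Adj] (u : V₁) (v : V₂) :
    DecidableRel (glue G₁ G₂ u v).Adj := fun x y => by
  rcases x with a | a <;> rcases y with b | b
  · exact inferInstanceAs (Decidable (G₁.Adj a b))
  · exact inferInstanceAs (Decidable (a = u ∧ G₂.Adj v b.1))
  · exact inferInstanceAs (Decidable (b = u ∧ G₂.Adj v a.1))
  · exact inferInstanceAs (Decidable (G₂.Adj a.1 b.1))

/-- The graph `G - vv₁ - ⋯ - vvₛ + uv₁ + ⋯ + uvₛ`, where `S = {v₁, …, vₛ}`. -/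
def shiftEdges {V : Type} [DecidableEq V] (G : SimpleGraph V) (u v : V) (S : Finset V) :
    SimpleGraph V where
  Adj x y := x ≠ y ∧
    ((G.Adj x y ∧ ¬(x = v ∧ y ∈ S) ∧ ¬(y = v ∧ x ∈ S)) ∨ (x = u ∧ y ∈ S) ∨ (y = u ∧ x ∈ S))
  symm := by
    constructor
    rintro x y ⟨hxy, h⟩
    refine ⟨hxy.symm, ?_⟩
    rcases h with h | h | h
    · exact Or.inl ⟨h.1.symm, h.2.2, h.2.1⟩
    · exact Or.inr (Or.inr h)
    · exact Or.inr (Or.inl h)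
  loopless := ⟨fun x h => h.1 rfl⟩

instance {V : Type} [DecidableEq V] (G : SimpleGraph V) [DecidableRel G.Adj] (u v : V)
    (S : Finset V) : DecidableRel (shiftEdges G u v S).Adj := fun x y =>
  inferInstanceAs (Decidable (_ ∧ _))

/-- The star on `n + 1` vertices, with center `none`. -/
def starGraph (n : ℕ) : SimpleGraph (Option (Fin n)) where
  Adj i j := (i = none ∧ j ≠ none) ∨ (j = none ∧ i ≠ none)
  symm := by
    constructor
    rintro i j (h | h)
    · exact Or.inr h
    · exact Or.inl h
  loopless := by
    constructor
    rintro i (h | h) <;> exact h.2 h.1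

instance (n : ℕ) : DecidableRel (starGraph n).Adj := fun i j =>
  inferInstanceAs (Decidable (_ ∨ _))



end NLap

/-!
Extend `f` by `0` at the new vertex `w`. The old vertices keep their degrees, so the
denominator `∑ d(x) f(x)²` of the Rayleigh quotient is unchanged, while in the numerator the edge
term `(f u - f v)²` is replaced by `f(u)² + f(v)²`, a gain of `2 f(u) f(v)`. As `ρ(𝓛)` is the
maximum of `⟨L x, x⟩ / ⟨D x, x⟩` and `f` attains it on `G`, this gives
`ρ(𝓛(G)) · ∑ d f² + 2 f(u) f(v) ≤ ρ(𝓛(G')) · ∑ d f²`.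
-/

open scoped MatrixOrder in
lemma Matrix.IsHermitian.dotProduct_mulVec_le {n : Type*} [Fintype n] [DecidableEq n]
    {A : Matrix n n ℝ} (hA : A.IsHermitian) {ρ : ℝ} (hρ : ∀ i, hA.eigenvalues i ≤ ρ)
    (x : n → ℝ) : x ⬝ᵥ (A *ᵥ x) ≤ ρ * (x ⬝ᵥ x) := by
  have hle : A ≤ algebraMap ℝ _ ρ := le_algebraMap_of_spectrum_le <| by
    rw [hA.spectrum_real_eq_range_eigenvalues]
    rintro _ ⟨i, rfl⟩
    exact hρ i
  simpa [sub_mulVec, Algebra.algebraMap_eq_smul_one, smul_mulVec, dotProduct_smul] using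
    (Matrix.le_iff.mp hle).dotProduct_mulVec_nonneg x

lemma Multiset.le_getD_sort_card_sub_one {α : Type*} [LinearOrder α] {s : Multiset α} {x : α}
    (hx : x ∈ s) (d : α) : x ≤ (s.sort (· ≤ ·)).getD (card s - 1) d := by
  have hmem : x ∈ s.sort (· ≤ ·) := (Multiset.mem_sort _).2 hx
  have hlen : card s - 1 < (s.sort (· ≤ ·)).length := by
    have := Multiset.card_pos_iff_exists_mem.2 ⟨x, hx⟩
    rw [Multiset.length_sort]; omega
  rw [List.getD_eq_getElem _ _ hlen]
  simpa [List.getLast_eq_getElem] using (s.pairwise_sort (· ≤ ·)).rel_getLast hmem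

lemma Matrix.sum_elim_zero_dotProduct_mulVec {m n R : Type*} [Fintype m] [Fintype n]
    [NonUnitalNonAssocSemiring R] (M : Matrix (m ⊕ n) (m ⊕ n) R) (x : m → R) :
    Sum.elim x 0 ⬝ᵥ (M *ᵥ Sum.elim x 0) = x ⬝ᵥ (M.toBlocks₁₁ *ᵥ x) := by
  simp [dotProduct, mulVec, Fintype.sum_sum_type, toBlocks₁₁]

lemma Matrix.dotProduct_single_add_single_mulVec {n R : Type*} [Fintype n] [DecidableEq n]
    [CommRing R] (i j : n) (x : n → R) :
    x ⬝ᵥ ((single i j 1 + single j i 1) *ᵥ x) = 2 * (x i * x j) := by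
  simp only [add_mulVec, single_mulVec_eq, one_mul, dotProduct_add, dotProduct_smul,
    dotProduct_single, mul_one, smul_eq_mul]
  ring

namespace NLap

section Spectrum

variable {V : Type} [Fintype V] [DecidableEq V]

lemma eigenvalues_le_nthEig_card {A : Matrix V V ℝ} (hA : A.IsHermitian) (i : V) :
    hA.eigenvalues i ≤ nthEig A (Fintype.card V) := by
  have hcard : Fintype.card V = Multiset.card A.charpoly.roots := by
    simp [hA.roots_charpoly_eq_eigenvalues]
  rw [nthEig, hcard]
  exact Multiset.le_getD_sort_card_sub_one (by simp [hA.roots_charpoly_eq_eigenvalues]) 0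

lemma normLap_isHermitian (G : SimpleGraph V) [DecidableRel G.Adj] : (normLap G).IsHermitian := by
  rw [Matrix.IsHermitian, conjTranspose_eq_transpose_of_trivial, normLap]
  simp only [transpose_mul, diagonal_transpose, (G.isSymm_lapMatrix (R := ℝ)).eq,
    Matrix.mul_assoc]

lemma dotProduct_lapMatrix_mulVec_le_rhoL (G : SimpleGraph V) [DecidableRel G.Adj]
    (hdeg : ∀ w, 0 < G.degree w) (x : V → ℝ) :
    x ⬝ᵥ (G.lapMatrix ℝ *ᵥ x) ≤ rhoL G * (x ⬝ᵥ (G.degMatrix ℝ *ᵥ x)) := by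
  have hsqrt (w : V) : Real.sqrt (G.degree w) ≠ 0 :=
    (Real.sqrt_pos.2 (Nat.cast_pos.2 (hdeg w))).ne'
  set y : V → ℝ := fun w => Real.sqrt (G.degree w) * x w
  have hy : diagonal (fun w => (Real.sqrt (G.degree w : ℝ))⁻¹) *ᵥ y = x := by
    ext w
    simp [y, mulVec_diagonal, inv_mul_cancel_left₀ (hsqrt w)]
  have hquad : y ⬝ᵥ (normLap G *ᵥ y) = x ⬝ᵥ (G.lapMatrix ℝ *ᵥ x) := by
    rw [normLap, ← mulVec_mulVec, ← mulVec_mulVec, hy, dotProduct_mulVec,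
      ← mulVec_transpose, diagonal_transpose, hy]
  have hnorm : y ⬝ᵥ y = x ⬝ᵥ (G.degMatrix ℝ *ᵥ x) := by
    rw [SimpleGraph.dotProduct_mulVec_degMatrix]
    refine Finset.sum_congr rfl fun w _ => ?_
    rw [mul_mul_mul_comm, Real.mul_self_sqrt (Nat.cast_nonneg _), mul_assoc]
  have hρ (i : V) := eigenvalues_le_nthEig_card (normLap_isHermitian G) i
  rw [← hquad, ← hnorm]
  exact (normLap_isHermitian G).dotProduct_mulVec_le hρ y

end Spectrum

section Subdivide

variable {V : Type} (G : SimpleGraph V) {u v : V}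

@[simp]
lemma subdivide_adj_inl_inl {a b : V} :
    (subdivide G u v).Adj (Sum.inl a) (Sum.inl b) ↔
      G.Adj a b ∧ ¬(a = u ∧ b = v) ∧ ¬(a = v ∧ b = u) := Iff.rfl

@[simp]
lemma subdivide_adj_inl_inr {a : V} {t : Unit} :
    (subdivide G u v).Adj (Sum.inl a) (Sum.inr t) ↔ a = u ∨ a = v := Iff.rfl

@[simp]
lemma subdivide_adj_inr_inl {t : Unit} {b : V} :
    (subdivide G u v).Adj (Sum.inr t) (Sum.inl b) ↔ b = u ∨ b = v := Iff.rfl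

@[simp]
lemma subdivide_not_adj_inr_inr {t s : Unit} : ¬(subdivide G u v).Adj (Sum.inr t) (Sum.inr s) :=
  id

variable [DecidableEq V] [DecidableRel G.Adj]

lemma toBlocks₁₁_adjMatrix_subdivide (R : Type) [Ring R] (huv : G.Adj u v) :
    ((subdivide G u v).adjMatrix R).toBlocks₁₁ =
      G.adjMatrix R - (single u v 1 + single v u 1) := by
  ext a b
  have hvu := huv.symm
  have hne := huv.ne
  have hne' := hne.symm
  by_cases hau : a = u <;> by_cases hbv : b = v <;> by_cases hav : a = v <;>
    by_cases hbu : b = u <;>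
    simp_all [toBlocks₁₁, SimpleGraph.adjMatrix_apply, eq_comm (b := a), eq_comm (b := b)]

variable [Fintype V]

lemma degree_subdivide_inl (huv : G.Adj u v) (a : V) :
    (subdivide G u v).degree (Sum.inl a) = G.degree a := by
  -- Row `a` loses `[a = u] + [a = v]` inside `V` and gains `[a = u ∨ a = v]` at the new vertex.
  have hrow (b : V) := congrFun₂ (toBlocks₁₁_adjMatrix_subdivide G ℤ huv) a b
  simp only [toBlocks₁₁, of_apply, SimpleGraph.adjMatrix_apply, Matrix.sub_apply,
    Matrix.add_apply] at hrow
  have h := SimpleGraph.degree_eq_sum_if_adj (R := ℤ) (subdivide G u v) (Sum.inl a)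
  rw [Fintype.sum_sum_type] at h
  simp only [hrow, Finset.sum_sub_distrib, Finset.sum_add_distrib,
    ← SimpleGraph.degree_eq_sum_if_adj] at h
  simp only [single_apply, ite_and, subdivide_adj_inl_inr, Fintype.sum_unique] at h
  have hne := huv.ne
  rcases eq_or_ne a u with rfl | hau
  · simpa [hne.symm] using h
  rcases eq_or_ne a v with rfl | hav
  · simpa [hne, hau] using h
  · simpa [hau, hav, hau.symm, hav.symm] using h

lemma toBlocks₁₁_degMatrix_subdivide (R : Type) [AddMonoidWithOne R] (huv : G.Adj u v) :
    ((subdivide G u v).degMatrix R).toBlocks₁₁ = G.degMatrix R := by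
  ext a b
  simp [toBlocks₁₁, SimpleGraph.degMatrix, diagonal_apply, degree_subdivide_inl G huv]

lemma toBlocks₁₁_lapMatrix_subdivide (R : Type) [Ring R] (huv : G.Adj u v) :
    ((subdivide G u v).lapMatrix R).toBlocks₁₁ =
      G.lapMatrix R + (single u v 1 + single v u 1) := by
  rw [SimpleGraph.lapMatrix, SimpleGraph.lapMatrix, ← toBlocks₁₁_degMatrix_subdivide G R huv,
    sub_add, ← toBlocks₁₁_adjMatrix_subdivide G R huv]
  rfl

lemma dotProduct_degMatrix_mulVec_subdivide {R : Type} [CommRing R] (huv : G.Adj u v)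
    (x : V → R) :
    Sum.elim x 0 ⬝ᵥ ((subdivide G u v).degMatrix R *ᵥ Sum.elim x 0) =
      x ⬝ᵥ (G.degMatrix R *ᵥ x) := by
  rw [sum_elim_zero_dotProduct_mulVec, toBlocks₁₁_degMatrix_subdivide G R huv]

lemma dotProduct_lapMatrix_mulVec_subdivide {R : Type} [CommRing R] (huv : G.Adj u v)
    (x : V → R) :
    Sum.elim x 0 ⬝ᵥ ((subdivide G u v).lapMatrix R *ᵥ Sum.elim x 0) =
      x ⬝ᵥ (G.lapMatrix R *ᵥ x) + 2 * (x u * x v) := by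
  rw [sum_elim_zero_dotProduct_mulVec, toBlocks₁₁_lapMatrix_subdivide G R huv, add_mulVec,
    dotProduct_add, dotProduct_single_add_single_mulVec]

lemma degree_subdivide_pos (huv : G.Adj u v) (hdeg : ∀ a, 0 < G.degree a) :
    ∀ x, 0 < (subdivide G u v).degree x
  | Sum.inl a => degree_subdivide_inl G huv a ▸ hdeg a
  | Sum.inr _ => SimpleGraph.Adj.degree_pos_left (w := Sum.inl u) (Or.inl rfl)

end Subdivide

section Harmonic

variable {V : Type} [Fintype V] [DecidableEq V] {G : SimpleGraph V} [DecidableRel G.Adj]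
  {lam : ℝ} {f : V → ℝ}

lemma IsHarmonic.dotProduct_lapMatrix_mulVec (hf : IsHarmonic G lam f) :
    f ⬝ᵥ (G.lapMatrix ℝ *ᵥ f) = lam * (f ⬝ᵥ (G.degMatrix ℝ *ᵥ f)) := by
  rw [hf.2, SimpleGraph.dotProduct_mulVec_degMatrix, dotProduct, Finset.mul_sum]
  exact Finset.sum_congr rfl fun w _ => by ring

lemma IsHarmonic.dotProduct_degMatrix_mulVec_pos (hf : IsHarmonic G lam f)
    (hdeg : ∀ w, 0 < G.degree w) : 0 < f ⬝ᵥ (G.degMatrix ℝ *ᵥ f) := by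
  obtain ⟨w, hw⟩ := Function.ne_iff.mp hf.1
  rw [SimpleGraph.dotProduct_mulVec_degMatrix]
  refine Finset.sum_pos' (fun a _ => ?_) ⟨w, Finset.mem_univ w, ?_⟩
  · rw [mul_assoc]; exact mul_nonneg (Nat.cast_nonneg _) (mul_self_nonneg _)
  · rw [mul_assoc]; exact mul_pos (Nat.cast_pos.2 (hdeg w)) (mul_self_pos.2 hw)

end Harmonic

/-- Theorem 4.1: let `G' = G - uv + uw + wv` be obtained by subdividing the edge `uv` and let
`f` be a harmonic eigenfunction associated with `ρ(𝓛(G))`. If `f(u)f(v) ≥ 0` then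
`ρ(𝓛(G)) ≤ ρ(𝓛(G'))`, and the inequality is strict if `f(u)f(v) > 0`. -/
theorem stmt14 {V : Type} [Fintype V] [DecidableEq V] (G : SimpleGraph V) [DecidableRel G.Adj]
    (hG : G.Connected) (u v : V) (huv : G.Adj u v) (f : V → ℝ)
    (hf : IsHarmonic G (rhoL G) f) (hfuv : 0 ≤ f u * f v) :
    rhoL G ≤ rhoL (subdivide G u v) ∧
      (0 < f u * f v → rhoL G < rhoL (subdivide G u v)) := by
  have : Nontrivial V := nontrivial_of_ne u v huv.ne
  have hdeg (a : V) : 0 < G.degree a := hG.preconnected.degree_pos_of_nontrivial a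
  have hpos := hf.dotProduct_degMatrix_mulVec_pos hdeg
  have hkey := dotProduct_lapMatrix_mulVec_le_rhoL (subdivide G u v)
    (degree_subdivide_pos G huv hdeg) (Sum.elim f 0)
  rw [dotProduct_lapMatrix_mulVec_subdivide G huv, dotProduct_degMatrix_mulVec_subdivide G huv,
    hf.dotProduct_lapMatrix_mulVec] at hkey
  exact ⟨le_of_mul_le_mul_right (by linarith) hpos,
    fun h => lt_of_mul_lt_mul_right (by linarith) hpos.le⟩

end NLap
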